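/- arXiv:1808.08877 — 10 statements merged into one kernel-verified Lean document; each statement's English description precedes it below -/
import Mathlib

section
/- Let n ≥ 1. There exists a line through (x_0,y_0) that is valid for the points (x_0,y_0),…,(x_n,y_n) if and only if a_min(n) ≤ a_max(n); moreover, in that case the line through (x_0,y_0) with slope (a_min(n) + a_max(n))/2 is valid for these points (correctness of the Angle algorithm's output). -/
/-- A line `y = a·x + b` is valid for the points `(x j, y j)`, `0 ≤ j ≤ n`,
if every residual is within the threshold `ε`. -/
def IsValidLine (n : ℕ) (x y : ℕ → ℝ) (ε a b : ℝ) : Prop :=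
  ∀ j ≤ n, |y j - (a * x j + b)| ≤ ε

lemma valid_iff_slope (n : ℕ) (x y : ℕ → ℝ)
    (hx : ∀ i j : ℕ, i < j → j ≤ n → x i < x j) (ε : ℝ) (hε : 0 < ε) (a : ℝ) :
    IsValidLine n x y ε a (y 0 - a * x 0) ↔
      ∀ j, 1 ≤ j → j ≤ n →
        (y j - ε - y 0) / (x j - x 0) ≤ a ∧ a ≤ (y j + ε - y 0) / (x j - x 0) := by
  constructor
  · intro h j hj1 hjn
    have hxx : 0 < x j - x 0 := sub_pos.mpr (hx 0 j hj1 hjn)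
    have := h j hjn
    rw [abs_le] at this
    constructor
    · rw [div_le_iff₀ hxx]; nlinarith [this.1]
    · rw [le_div_iff₀ hxx]; nlinarith [this.2]
  · intro h j hjn
    rcases Nat.eq_zero_or_pos j with hj | hj
    · subst hj; simp; linarith
    · have hxx : 0 < x j - x 0 := sub_pos.mpr (hx 0 j hj hjn)
      obtain ⟨h1, h2⟩ := h j hj hjn
      rw [div_le_iff₀ hxx] at h1
      rw [le_div_iff₀ hxx] at h2
      rw [abs_le]; constructor <;> nlinarith

/-- there is a valid line through `(x 0, y 0)` iff
`a_min n ≤ a_max n`; in that case the line through `(x 0, y 0)` of slope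
`(a_min n + a_max n)/2` (the Angle algorithm's output) is valid. -/
theorem angle_algorithm_correct (n : ℕ) (hn : 1 ≤ n) (x y : ℕ → ℝ)
    (hx : ∀ i j : ℕ, i < j → j ≤ n → x i < x j) (ε : ℝ) (hε : 0 < ε) :
    ((∃ a : ℝ, IsValidLine n x y ε a (y 0 - a * x 0)) ↔
      (Finset.Icc 1 n).sup' (Finset.nonempty_Icc.mpr hn)
          (fun j => (y j - ε - y 0) / (x j - x 0)) ≤
        (Finset.Icc 1 n).inf' (Finset.nonempty_Icc.mpr hn)
          (fun j => (y j + ε - y 0) / (x j - x 0))) ∧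
    ((Finset.Icc 1 n).sup' (Finset.nonempty_Icc.mpr hn)
          (fun j => (y j - ε - y 0) / (x j - x 0)) ≤
        (Finset.Icc 1 n).inf' (Finset.nonempty_Icc.mpr hn)
          (fun j => (y j + ε - y 0) / (x j - x 0)) →
      IsValidLine n x y ε
        (((Finset.Icc 1 n).sup' (Finset.nonempty_Icc.mpr hn)
            (fun j => (y j - ε - y 0) / (x j - x 0)) +
          (Finset.Icc 1 n).inf' (Finset.nonempty_Icc.mpr hn)
            (fun j => (y j + ε - y 0) / (x j - x 0))) / 2)
        (y 0 - (((Finset.Icc 1 n).sup' (Finset.nonempty_Icc.mpr hn)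
            (fun j => (y j - ε - y 0) / (x j - x 0)) +
          (Finset.Icc 1 n).inf' (Finset.nonempty_Icc.mpr hn)
            (fun j => (y j + ε - y 0) / (x j - x 0))) / 2) * x 0)) := by
  set ne := Finset.nonempty_Icc.mpr hn
  set L := (Finset.Icc 1 n).sup' ne (fun j => (y j - ε - y 0) / (x j - x 0)) with hL
  set U := (Finset.Icc 1 n).inf' ne (fun j => (y j + ε - y 0) / (x j - x 0)) with hU
  have key : ∀ a : ℝ, IsValidLine n x y ε a (y 0 - a * x 0) ↔ (L ≤ a ∧ a ≤ U) := by
    intro a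
    rw [valid_iff_slope n x y hx ε hε a, hL, hU]
    rw [Finset.sup'_le_iff, Finset.le_inf'_iff]
    constructor
    · intro h
      exact ⟨fun j hj => (h j (Finset.mem_Icc.mp hj).1 (Finset.mem_Icc.mp hj).2).1,
             fun j hj => (h j (Finset.mem_Icc.mp hj).1 (Finset.mem_Icc.mp hj).2).2⟩
    · intro ⟨h1, h2⟩ j hj1 hjn
      exact ⟨h1 j (Finset.mem_Icc.mpr ⟨hj1, hjn⟩), h2 j (Finset.mem_Icc.mpr ⟨hj1, hjn⟩)⟩
  have part2 : L ≤ U → IsValidLine n x y ε ((L + U) / 2) (y 0 - ((L + U) / 2) * x 0) := by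
    intro hLU
    exact (key _).mpr ⟨by linarith, by linarith⟩
  refine ⟨⟨fun ⟨a, ha⟩ => ?_, fun hLU => ⟨(L + U) / 2, part2 hLU⟩⟩, part2⟩
  obtain ⟨h1, h2⟩ := (key a).mp ha
  linarith
end

section
/- Let 2 ≤ i ≤ n. If the error segment of the i-th point lies outside the valid cone of the first i points, i.e. if a_min(i−1)·(x_i − x_0) + y_0 > y_i + ε or a_max(i−1)·(x_i − x_0) + y_0 < y_i − ε, then no line through (x_0,y_0) is valid for the points (x_0,y_0),…,(x_i,y_i) (termination/maximality of the Angle algorithm). -/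
/-- if the error segment of the `i`-th point lies outside the
valid cone determined by `a_min (i-1)` and `a_max (i-1)`, then no line through
`(x 0, y 0)` is valid for the first `i+1` points. -/
theorem angle_algorithm_maximal (n : ℕ) (x y : ℕ → ℝ)
    (hx : ∀ i j : ℕ, i < j → j ≤ n → x i < x j) (ε : ℝ) (hε : 0 < ε)
    (i : ℕ) (hi2 : 2 ≤ i) (hin : i ≤ n)
    (hout :
      (Finset.Icc 1 (i - 1)).sup' (Finset.nonempty_Icc.mpr (by omega))
            (fun j => (y j - ε - y 0) / (x j - x 0)) * (x i - x 0) + y 0 >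
          y i + ε ∨
      (Finset.Icc 1 (i - 1)).inf' (Finset.nonempty_Icc.mpr (by omega))
            (fun j => (y j + ε - y 0) / (x j - x 0)) * (x i - x 0) + y 0 <
          y i - ε) :
    ¬ ∃ a : ℝ, IsValidLine i x y ε a (y 0 - a * x 0) := by
  rintro ⟨a, ha⟩
  have hx0 : ∀ j, 1 ≤ j → j ≤ i → 0 < x j - x 0 := fun j h1 h2 =>
    sub_pos.mpr (hx 0 j h1 (le_trans h2 hin))
  have key : ∀ j, 1 ≤ j → j ≤ i → |y j - y 0 - a * (x j - x 0)| ≤ ε := by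
    intro j h1 h2
    have h := ha j h2
    have heq : y j - (a * x j + (y 0 - a * x 0)) = y j - y 0 - a * (x j - x 0) := by ring
    rwa [heq] at h
  have hne : (Finset.Icc 1 (i - 1)).Nonempty := Finset.nonempty_Icc.mpr (by omega)
  have hpi := hx0 i (by omega) le_rfl
  have hki := abs_le.mp (key i (by omega) le_rfl)
  rcases hout with h | h
  · have hS : (Finset.Icc 1 (i - 1)).sup' hne
        (fun j => (y j - ε - y 0) / (x j - x 0)) ≤ a := by
      apply Finset.sup'_le
      intro j hj
      rw [Finset.mem_Icc] at hj
      have hp := hx0 j hj.1 (by omega)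
      rw [div_le_iff₀ hp]
      have := (abs_le.mp (key j hj.1 (by omega))).2
      linarith
    have := mul_le_mul_of_nonneg_right hS hpi.le
    linarith
  · have hS : a ≤ (Finset.Icc 1 (i - 1)).inf' hne
        (fun j => (y j + ε - y 0) / (x j - x 0)) := by
      apply Finset.le_inf'
      intro j hj
      rw [Finset.mem_Icc] at hj
      have hp := hx0 j hj.1 (by omega)
      rw [le_div_iff₀ hp]
      have := (abs_le.mp (key j hj.1 (by omega))).1
      linarith
    have := mul_le_mul_of_nonneg_right hS hpi.le
    linarith
end

section
/- Let n ≥ 1. If the set of valid lines for the points (x_0,y_0),…,(x_n,y_n) is nonempty, then the set of slopes of valid lines, {a ∈ ℝ : ∃ b, |y_j − (a·x_j + b)| ≤ ε for all 0 ≤ j ≤ n}, is a nonempty closed bounded interval; in particular there exist a minimal-slope valid line and a maximal-slope valid line. -/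
/-- if some valid line exists, the set of slopes of valid lines is
a nonempty closed bounded interval `[lo, hi]`; in particular there are a
minimal-slope valid line and a maximal-slope valid line. -/
theorem valid_slopes_closed_interval (n : ℕ) (hn : 1 ≤ n) (x y : ℕ → ℝ)
    (hx : ∀ i j : ℕ, i < j → j ≤ n → x i < x j) (ε : ℝ) (hε : 0 < ε)
    (hne : ∃ a b : ℝ, ∀ j ≤ n, |y j - (a * x j + b)| ≤ ε) :
    ∃ lo hi : ℝ, lo ≤ hi ∧
      {a : ℝ | ∃ b : ℝ, ∀ j ≤ n, |y j - (a * x j + b)| ≤ ε} = Set.Icc lo hi := by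
  set T : Set (ℝ × ℝ) := {p | ∀ j ≤ n, |y j - (p.1 * x j + p.2)| ≤ ε} with hT
  have hS : {a : ℝ | ∃ b : ℝ, ∀ j ≤ n, |y j - (a * x j + b)| ≤ ε} = Prod.fst '' T := by
    ext a
    constructor
    · rintro ⟨b, hb⟩; exact ⟨(a, b), hb, rfl⟩
    · rintro ⟨⟨a', b⟩, hb, rfl⟩; exact ⟨b, hb⟩
  have hx01 : x 0 < x 1 := hx 0 1 one_pos hn
  -- T is closed
  have hTclosed : IsClosed T := by
    have : T = ⋂ j ∈ {j : ℕ | j ≤ n}, {p : ℝ × ℝ | |y j - (p.1 * x j + p.2)| ≤ ε} := by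
      ext p; simp [hT]
    rw [this]
    refine isClosed_biInter fun j _ => ?_
    have hc : Continuous fun p : ℝ × ℝ => |y j - (p.1 * x j + p.2)| := by
      fun_prop
    exact isClosed_le hc continuous_const
  -- T is bounded
  have hTbdd : Bornology.IsBounded T := by
    rw [Metric.isBounded_iff_subset_closedBall 0]
    set A : ℝ := (|y 1 - y 0| + 2 * ε) / (x 1 - x 0) with hA
    refine ⟨A + (|y 0| + ε + A * |x 0|), fun p hp => ?_⟩
    have h0 := abs_le.mp (hp 0 (Nat.zero_le n))
    have h1 := abs_le.mp (hp 1 hn)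
    have hy := le_abs_self (y 1 - y 0)
    have hy' := neg_abs_le (y 1 - y 0)
    have ha : |p.1| ≤ A := by
      have h2 : |p.1| * (x 1 - x 0) ≤ |y 1 - y 0| + 2 * ε := by
        rcases abs_cases p.1 with ⟨h, _⟩ | ⟨h, _⟩ <;> rw [h] <;> nlinarith
      rw [hA, le_div_iff₀ (by linarith : (0:ℝ) < x 1 - x 0)]
      exact h2
    have hb : |p.2| ≤ |y 0| + ε + A * |x 0| := by
      have hpx : |p.1 * x 0| ≤ A * |x 0| := by
        rw [abs_mul]; exact mul_le_mul_of_nonneg_right ha (abs_nonneg _)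
      have hz := le_abs_self (p.1 * x 0)
      have hz' := neg_abs_le (p.1 * x 0)
      have hy0 := le_abs_self (y 0)
      have hy0' := neg_abs_le (y 0)
      rw [abs_le]
      constructor <;> linarith
    rw [Metric.mem_closedBall, dist_zero_right]
    have hnorm : ‖p‖ ≤ max |p.1| |p.2| := by
      rw [Prod.norm_def, Real.norm_eq_abs, Real.norm_eq_abs]
    have hA0 : 0 ≤ A := le_trans (abs_nonneg _) ha
    have hB0 : 0 ≤ |y 0| + ε + A * |x 0| := by positivity
    calc ‖p‖ ≤ max |p.1| |p.2| := hnorm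
      _ ≤ A + (|y 0| + ε + A * |x 0|) := by
          apply max_le <;> linarith
  -- T is convex
  have hTconv : Convex ℝ T := by
    intro p hp q hq s t hs ht hst
    intro j hj
    have hpj := hp j hj
    have hqj := hq j hj
    have h1 : (s • p + t • q).1 = s * p.1 + t * q.1 := rfl
    have h2 : (s • p + t • q).2 = s * p.2 + t * q.2 := rfl
    have heq : y j - ((s • p + t • q).1 * x j + (s • p + t • q).2)
        = s * (y j - (p.1 * x j + p.2)) + t * (y j - (q.1 * x j + q.2)) := by
      have hs1 : s = 1 - t := by linarith
      rw [h1, h2, hs1]; ring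
    calc |y j - ((s • p + t • q).1 * x j + (s • p + t • q).2)|
        = |s * (y j - (p.1 * x j + p.2)) + t * (y j - (q.1 * x j + q.2))| := by rw [heq]
      _ ≤ |s * (y j - (p.1 * x j + p.2))| + |t * (y j - (q.1 * x j + q.2))| := abs_add_le _ _
      _ = s * |y j - (p.1 * x j + p.2)| + t * |y j - (q.1 * x j + q.2)| := by
          rw [abs_mul, abs_mul, abs_of_nonneg hs, abs_of_nonneg ht]
      _ ≤ s * ε + t * ε := by
          gcongr
      _ = ε := by rw [← add_mul, hst, one_mul]
  -- conclude
  have hTcomp : IsCompact T := Metric.isCompact_of_isClosed_isBounded hTclosed hTbdd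
  have hScomp : IsCompact (Prod.fst '' T) := hTcomp.image continuous_fst
  have hSconv : Convex ℝ (Prod.fst '' T) :=
    hTconv.linear_image (LinearMap.fst ℝ ℝ ℝ)
  have hSne : (Prod.fst '' T).Nonempty := by
    obtain ⟨a, b, hab⟩ := hne
    exact ⟨a, (a, b), hab, rfl⟩
  have hSconn : IsConnected (Prod.fst '' T) := ⟨hSne, hSconv.isPreconnected⟩
  have := eq_Icc_of_connected_compact hSconn hScomp
  refine ⟨sInf (Prod.fst '' T), sSup (Prod.fst '' T), ?_, hS.trans this⟩
  have h2 : (Set.Icc (sInf (Prod.fst '' T)) (sSup (Prod.fst '' T))).Nonempty := this ▸ hSne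
  exact Set.nonempty_Icc.mp h2
end

section
/- Let n ≥ 1 and suppose the line (a, b) is valid for the points (x_0,y_0),…,(x_n,y_n) and has minimal slope among all valid lines (i.e. a ≤ a' for the slope a' of every valid line). Then the line passes through a lower endpoint: there exists 0 ≤ j ≤ n with a·x_j + b = y_j − ε. -/
/-- a minimal-slope valid line passes through the lower endpoint
of some error segment. -/
theorem min_slope_line_touches_lower_endpoint (n : ℕ) (hn : 1 ≤ n)
    (x y : ℕ → ℝ) (hx : ∀ i j : ℕ, i < j → j ≤ n → x i < x j)
    (ε : ℝ) (hε : 0 < ε) (a b : ℝ)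
    (hvalid : IsValidLine n x y ε a b)
    (hmin : ∀ a' b' : ℝ, IsValidLine n x y ε a' b' → a ≤ a') :
    ∃ j ≤ n, a * x j + b = y j - ε := by
  by_contra hc
  push_neg at hc
  -- strict slack for every point
  have hslack : ∀ j ≤ n, y j - (a * x j + b) < ε := by
    intro j hj
    have h1 := hvalid j hj
    have h2 := hc j hj
    have := abs_le.1 h1
    rcases lt_or_eq_of_le this.2 with h | h
    · exact h
    · exfalso; apply h2; linarith
  -- the pivot set
  have hne : (Finset.Icc 1 n).Nonempty := ⟨1, Finset.mem_Icc.2 ⟨le_refl 1, hn⟩⟩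
  set f : ℕ → ℝ := fun j => (ε - (y j - (a * x j + b))) / (x j - x 0) with hf
  set δ : ℝ := (Finset.Icc 1 n).inf' hne f with hδ
  have hxpos : ∀ j ∈ Finset.Icc 1 n, 0 < x j - x 0 := by
    intro j hj
    rw [Finset.mem_Icc] at hj
    have := hx 0 j (by omega) hj.2
    linarith
  have hδpos : 0 < δ := by
    rw [hδ, Finset.lt_inf'_iff]
    intro j hj
    have h1 := hxpos j hj
    rw [Finset.mem_Icc] at hj
    have h2 := hslack j hj.2
    exact div_pos (by linarith) h1
  have hδle : ∀ j ∈ Finset.Icc 1 n, δ ≤ f j := fun j hj => Finset.inf'_le f hj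
  -- the tilted line is valid
  have hvalid' : IsValidLine n x y ε (a - δ) (b + δ * x 0) := by
    intro j hj
    have hold := abs_le.1 (hvalid j hj)
    have key : y j - ((a - δ) * x j + (b + δ * x 0))
        = (y j - (a * x j + b)) + δ * (x j - x 0) := by ring
    rcases Nat.eq_zero_or_pos j with h0 | h1
    · subst h0
      rw [abs_le, key]
      constructor <;> nlinarith [hold.1, hold.2]
    · have hjm : j ∈ Finset.Icc 1 n := Finset.mem_Icc.2 ⟨h1, hj⟩
      have hxj := hxpos j hjm
      have hle := hδle j hjm
      rw [hf] at hle
      simp only at hle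
      have hmul : δ * (x j - x 0) ≤ ε - (y j - (a * x j + b)) := by
        calc δ * (x j - x 0) ≤ ((ε - (y j - (a * x j + b))) / (x j - x 0)) * (x j - x 0) := by
              exact mul_le_mul_of_nonneg_right hle (le_of_lt hxj)
          _ = ε - (y j - (a * x j + b)) := div_mul_cancel₀ _ (ne_of_gt hxj)
      rw [abs_le, key]
      constructor
      · nlinarith
      · linarith
  have := hmin (a - δ) (b + δ * x 0) hvalid'
  linarith
end

section
/- Let n ≥ 1 and suppose the line (a, b) is valid for the points (x_0,y_0),…,(x_n,y_n) and has maximal slope among all valid lines (i.e. a ≥ a' for the slope a' of every valid line). Then the line passes through an upper endpoint: there exists 0 ≤ j ≤ n with a·x_j + b = y_j + ε. -/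
/-- a maximal-slope valid line passes through the upper endpoint
of some error segment. -/
theorem max_slope_line_touches_upper_endpoint (n : ℕ) (hn : 1 ≤ n)
    (x y : ℕ → ℝ) (hx : ∀ i j : ℕ, i < j → j ≤ n → x i < x j)
    (ε : ℝ) (hε : 0 < ε) (a b : ℝ)
    (hvalid : IsValidLine n x y ε a b)
    (hmax : ∀ a' b' : ℝ, IsValidLine n x y ε a' b' → a' ≤ a) :
    ∃ j ≤ n, a * x j + b = y j + ε := by
  by_contra h
  push_neg at h
  have hslack : ∀ j ≤ n, 0 < y j + ε - (a * x j + b) := by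
    intro j hj
    have hv := abs_le.mp (hvalid j hj)
    have hne := h j hj
    rcases lt_or_eq_of_le (by linarith [hv.1] : a * x j + b ≤ y j + ε) with h' | h'
    · linarith
    · exact absurd h' hne
  obtain ⟨j0, hj0, hmin⟩ := Finset.exists_min_image (Finset.range (n+1))
    (fun j => y j + ε - (a * x j + b)) ⟨0, by simp⟩
  set δ := y j0 + ε - (a * x j0 + b) with hδdef
  have hδ : 0 < δ := hslack j0 (Nat.lt_succ_iff.mp (Finset.mem_range.mp hj0))
  have hx0n : x 0 < x n := hx 0 n hn le_rfl
  set t := δ / (x n - x 0) with ht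
  have htpos : 0 < t := div_pos hδ (by linarith)
  have htn : t * (x n - x 0) = δ := div_mul_cancel₀ δ (by linarith)
  have hvalid' : IsValidLine n x y ε (a + t) (b - t * x 0) := by
    intro j hj
    have hv := abs_le.mp (hvalid j hj)
    have hxj : x 0 ≤ x j := by
      rcases Nat.eq_zero_or_pos j with rfl | hj0'
      · exact le_rfl
      · exact (hx 0 j hj0' hj).le
    have hxjn : x j ≤ x n := by
      rcases lt_or_eq_of_le hj with h' | h'
      · exact (hx j n h' le_rfl).le
      · rw [h']
    have hslackj : δ ≤ y j + ε - (a * x j + b) :=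
      hmin j (Finset.mem_range.mpr (Nat.lt_succ_of_le hj))
    have hle : t * (x j - x 0) ≤ δ := by nlinarith
    rw [abs_le]
    constructor
    · nlinarith
    · nlinarith [mul_nonneg htpos.le (sub_nonneg.mpr hxj)]
  have := hmax (a + t) (b - t * x 0) hvalid'
  linarith
end

section
/- Let n ≥ 1. The minimal-slope valid line is unique: if (a,b) and (a,b') are both valid for the points (x_0,y_0),…,(x_n,y_n) and a is minimal among the slopes of valid lines (a ≤ a' for every valid line (a',b'')), then b = b'. Symmetrically, if a is maximal among the slopes of valid lines and (a,b), (a,b') are both valid, then b = b'. -/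
lemma perturb_slope (n : ℕ) (hn : 1 ≤ n)
    (x y : ℕ → ℝ) (hx : ∀ i j : ℕ, i < j → j ≤ n → x i < x j)
    (ε a b b' : ℝ) (hvb : IsValidLine n x y ε a b)
    (hvb' : IsValidLine n x y ε a b') (hbb' : b < b') :
    ∃ δ > 0, (∃ c, IsValidLine n x y ε (a - δ) c) ∧
      (∃ c, IsValidLine n x y ε (a + δ) c) := by
  set d := (b' - b) / 2 with hd
  have hdpos : 0 < d := by simp [hd]; linarith
  have hD : 0 < x n - x 0 := by
    have := hx 0 n hn le_rfl
    linarith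
  set δ := d / (x n - x 0) with hδ
  have hδpos : 0 < δ := div_pos hdpos hD
  set bm := (b + b') / 2 with hbm
  -- slack at each point
  have key : ∀ j ≤ n, |y j - (a * x j + bm)| ≤ ε - d := by
    intro j hj
    have h1 := abs_le.mp (hvb j hj)
    have h2 := abs_le.mp (hvb' j hj)
    rw [abs_le]
    constructor <;> [nlinarith [h2.1]; nlinarith [h1.2]]
  have hxrange : ∀ j ≤ n, 0 ≤ δ * (x j - x 0) ∧ δ * (x j - x 0) ≤ d := by
    intro j hj
    have h0 : x 0 ≤ x j := by
      rcases Nat.eq_zero_or_pos j with h | h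
      · simp [h]
      · exact le_of_lt (hx 0 j h hj)
    have h1 : x j ≤ x n := by
      rcases eq_or_lt_of_le hj with h | h
      · simp [h]
      · exact le_of_lt (hx j n h le_rfl)
    constructor
    · exact mul_nonneg (le_of_lt hδpos) (by linarith)
    · have : δ * (x j - x 0) ≤ δ * (x n - x 0) :=
        mul_le_mul_of_nonneg_left (by linarith) (le_of_lt hδpos)
      rw [hδ] at this
      rw [div_mul_cancel₀] at this
      · linarith
      · exact ne_of_gt hD
  refine ⟨δ, hδpos, ⟨bm + δ * x 0, ?_⟩, ⟨bm - δ * x 0, ?_⟩⟩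
  · intro j hj
    have h := abs_le.mp (key j hj)
    have h2 := hxrange j hj
    rw [abs_le]
    constructor <;> nlinarith [h.1, h.2, h2.1, h2.2]
  · intro j hj
    have h := abs_le.mp (key j hj)
    have h2 := hxrange j hj
    rw [abs_le]
    constructor <;> nlinarith [h.1, h.2, h2.1, h2.2]

/-- the minimal-slope valid line is unique, and symmetrically so
is the maximal-slope valid line: two valid lines with the same extremal slope
have the same intercept. -/
theorem extreme_slope_line_unique (n : ℕ) (hn : 1 ≤ n)
    (x y : ℕ → ℝ) (hx : ∀ i j : ℕ, i < j → j ≤ n → x i < x j)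
    (ε : ℝ) (hε : 0 < ε) :
    (∀ a b b' : ℝ, IsValidLine n x y ε a b → IsValidLine n x y ε a b' →
      (∀ a' b'' : ℝ, IsValidLine n x y ε a' b'' → a ≤ a') → b = b') ∧
    (∀ a b b' : ℝ, IsValidLine n x y ε a b → IsValidLine n x y ε a b' →
      (∀ a' b'' : ℝ, IsValidLine n x y ε a' b'' → a' ≤ a) → b = b') := by
  constructor
  · intro a b b' hb hb' hmin
    by_contra hne
    rcases lt_or_gt_of_ne hne with h | h
    · obtain ⟨δ, hδ, ⟨c, hc⟩, -⟩ := perturb_slope n hn x y hx ε a b b' hb hb' h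
      have := hmin (a - δ) c hc
      linarith
    · obtain ⟨δ, hδ, ⟨c, hc⟩, -⟩ := perturb_slope n hn x y hx ε a b' b hb' hb h
      have := hmin (a - δ) c hc
      linarith
  · intro a b b' hb hb' hmax
    by_contra hne
    rcases lt_or_gt_of_ne hne with h | h
    · obtain ⟨δ, hδ, -, ⟨c, hc⟩⟩ := perturb_slope n hn x y hx ε a b b' hb hb' h
      have := hmax (a + δ) c hc
      linarith
    · obtain ⟨δ, hδ, -, ⟨c, hc⟩⟩ := perturb_slope n hn x y hx ε a b' b hb' hb h
      have := hmax (a + δ) c hc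
      linarith
end

section
/- Let n ≥ 1 and suppose (a*, b*) is valid for the points (x_0,y_0),…,(x_n,y_n) and has maximal slope among all valid lines. Then the maximal-slope line dominates all valid lines to the right of the data: for every valid line (a,b) and every x ≥ x_n, a·x + b ≤ a*·x + b*. -/
/-- the maximal-slope valid line dominates every valid line to
the right of the data. -/
theorem max_slope_line_dominates_right (n : ℕ) (hn : 1 ≤ n)
    (x y : ℕ → ℝ) (hx : ∀ i j : ℕ, i < j → j ≤ n → x i < x j)
    (ε : ℝ) (hε : 0 < ε) (aStar bStar : ℝ)
    (hvalid : IsValidLine n x y ε aStar bStar)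
    (hmax : ∀ a b : ℝ, IsValidLine n x y ε a b → a ≤ aStar) :
    ∀ a b : ℝ, IsValidLine n x y ε a b →
      ∀ t : ℝ, x n ≤ t → a * t + b ≤ aStar * t + bStar := by
  intro a b hab t ht
  by_contra hlt
  push_neg at hlt
  have ha : a ≤ aStar := hmax a b hab
  set c : ℝ := a * x n + b - (aStar * x n + bStar) with hc
  have hc0 : 0 < c := by
    have := mul_nonneg (sub_nonneg.2 ha) (sub_nonneg.2 ht)
    nlinarith
  have hd : 0 < x n - x 0 := by
    have := hx 0 n hn le_rfl
    linarith
  set q : ℝ := c / (x n - x 0) with hqdef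
  have hq0 : 0 < q := div_pos hc0 hd
  have hqd : q * (x n - x 0) = c := div_mul_cancel₀ c (ne_of_gt hd)
  have hvalidA : IsValidLine n x y ε (aStar + q) (bStar - q * x 0) := by
    intro j hj
    have hx0j : x 0 ≤ x j := by
      rcases Nat.eq_zero_or_pos j with h | h
      · simp [h]
      · exact le_of_lt (hx 0 j h hj)
    have hxjn : x j ≤ x n := by
      rcases eq_or_lt_of_le hj with h | h
      · simp [h]
      · exact le_of_lt (hx j n h le_rfl)
    have hcfj : c ≤ a * x j + b - (aStar * x j + bStar) := by
      have := mul_nonneg (sub_nonneg.2 ha) (sub_nonneg.2 hxjn)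
      nlinarith
    have h1 : 0 ≤ q * (x j - x 0) := mul_nonneg (le_of_lt hq0) (by linarith)
    have h2 : q * (x j - x 0) ≤ c := by
      have := mul_le_mul_of_nonneg_left (by linarith : x j - x 0 ≤ x n - x 0) (le_of_lt hq0)
      linarith
    have hstar := hvalid j hj
    have hline := hab j hj
    rw [abs_le] at hstar hline ⊢
    constructor
    · nlinarith [hstar.2, hline.2]
    · nlinarith [hstar.1, hline.1]
  have := hmax _ _ hvalidA
  linarith
end

section
/- Let n ≥ 1 and suppose (a*, b*) is valid for the points (x_0,y_0),…,(x_n,y_n) and has minimal slope among all valid lines. Then the minimal-slope line is dominated by all valid lines to the right of the data: for every valid line (a,b) and every x ≥ x_n, a·x + b ≥ a*·x + b*. -/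
/-!
If some valid line dipped below the minimal-slope line `(a*, b*)` at a point `t ≥ xₙ`, then,
its slope being at least `a*`, it would lie below `(a*, b*)` by a fixed margin `δ > 0` at every
data point. So `(a*, b*)` keeps a slack `δ` above the lower boundaries `y j - ε`, and rotating
it clockwise about the leftmost abscissa `x₀` by a small enough angle yields a valid line of
smaller slope.
-/

namespace IsValidLine

variable {n : ℕ} {x y : ℕ → ℝ} {ε a b : ℝ}

/-- Rotating about `p` lowers the line on `[p, q]` by at most `η * (q - p)`, never raises it. -/
theorem rotate (h : IsValidLine n x y ε a b) {p q δ η : ℝ}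
    (hp : ∀ j ≤ n, p ≤ x j) (hq : ∀ j ≤ n, x j ≤ q)
    (hslack : ∀ j ≤ n, y j - ε + δ ≤ a * x j + b) (hη : 0 ≤ η) (hηδ : η * (q - p) ≤ δ) :
    IsValidLine n x y ε (a - η) (b + η * p) := by
  intro j hj
  have hdrop_nonneg : 0 ≤ η * (x j - p) := mul_nonneg hη (sub_nonneg.mpr (hp j hj))
  have hdrop_le : η * (x j - p) ≤ δ :=
    (mul_le_mul_of_nonneg_left (sub_le_sub_right (hq j hj) p) hη).trans hηδ
  obtain ⟨hlow, -⟩ := abs_le.mp (h j hj)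
  have := hslack j hj
  rw [abs_le]
  constructor <;> nlinarith

theorem exists_lt_slope (h : IsValidLine n x y ε a b) {p q δ : ℝ}
    (hp : ∀ j ≤ n, p ≤ x j) (hq : ∀ j ≤ n, x j ≤ q) (hδ : 0 < δ)
    (hslack : ∀ j ≤ n, y j - ε + δ ≤ a * x j + b) :
    ∃ a' b', IsValidLine n x y ε a' b' ∧ a' < a := by
  have hpq : 0 ≤ q - p := sub_nonneg.mpr ((hp 0 n.zero_le).trans (hq 0 n.zero_le))
  set η := δ / (q - p + 1)
  have hη : 0 < η := by positivity
  have hηδ : η * (q - p) ≤ δ := by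
    calc η * (q - p) ≤ η * (q - p + 1) := by linarith
      _ = δ := div_mul_cancel₀ δ (by positivity)
  exact ⟨a - η, b + η * p, h.rotate hp hq hslack hη.le hηδ, by linarith⟩

end IsValidLine

theorem min_slope_line_dominated_right_general (n : ℕ)
    (x y : ℕ → ℝ) (hx : ∀ i j : ℕ, i < j → j ≤ n → x i < x j)
    (ε : ℝ) (aStar bStar : ℝ)
    (hvalid : IsValidLine n x y ε aStar bStar)
    (hmin : ∀ a b : ℝ, IsValidLine n x y ε a b → aStar ≤ a) :
    ∀ a b : ℝ, IsValidLine n x y ε a b →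
      ∀ t : ℝ, x n ≤ t → aStar * t + bStar ≤ a * t + b := by
  intro a b hab t ht
  by_contra! hbelow
  have hleft : ∀ j ≤ n, x 0 ≤ x j := fun j hj =>
    j.eq_zero_or_pos.elim (fun h => h ▸ le_rfl) fun h => (hx 0 j h hj).le
  have hright : ∀ j ≤ n, x j ≤ x n := fun j hj =>
    hj.eq_or_lt.elim (fun h => h ▸ le_rfl) fun h => (hx j n h le_rfl).le
  set δ := aStar * t + bStar - (a * t + b)
  have hslack : ∀ j ≤ n, y j - ε + δ ≤ aStar * x j + bStar := by
    intro j hj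
    have hlow := (abs_le.mp (hab j hj)).2
    have hslope := hmin a b hab
    nlinarith [mul_le_mul_of_nonneg_left ((hright j hj).trans ht) (sub_nonneg.mpr hslope)]
  obtain ⟨a', b', hvalid', hlt⟩ :=
    hvalid.exists_lt_slope hleft hright (by simp only [δ]; linarith) hslack
  exact (hmin a' b' hvalid').not_gt hlt

/-- the minimal-slope valid line is dominated by every valid
line to the right of the data. -/
theorem min_slope_line_dominated_right (n : ℕ) (hn : 1 ≤ n)
    (x y : ℕ → ℝ) (hx : ∀ i j : ℕ, i < j → j ≤ n → x i < x j)
    (ε : ℝ) (hε : 0 < ε) (aStar bStar : ℝ)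
    (hvalid : IsValidLine n x y ε aStar bStar)
    (hmin : ∀ a b : ℝ, IsValidLine n x y ε a b → aStar ≤ a) :
    ∀ a b : ℝ, IsValidLine n x y ε a b →
      ∀ t : ℝ, x n ≤ t → aStar * t + bStar ≤ a * t + b :=
  min_slope_line_dominated_right_general n x y hx ε aStar bStar hvalid hmin
end

section
/- Let n ≥ 2. Suppose (a_min, b_min) is valid for the first n points (x_0,y_0),…,(x_{n−1},y_{n−1}) with minimal slope among lines valid for those points, and (a_max, b_max) is valid for them with maximal slope. If the new point (x_n, y_n) satisfies y_n + ε < a_min·x_n + b_min, or satisfies y_n − ε > a_max·x_n + b_max, then no line is valid for all n+1 points (x_0,y_0),…,(x_n,y_n). -/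
/-- if the extreme-slope lines valid for the first `n` points
both miss the error segment of the new point `(x n, y n)` (the new segment is
outside the reachable region), then no line is valid for all `n+1` points. -/
theorem new_point_invalid (n : ℕ) (hn : 2 ≤ n) (x y : ℕ → ℝ)
    (hx : ∀ i j : ℕ, i < j → j ≤ n → x i < x j) (ε : ℝ) (hε : 0 < ε)
    (aMin bMin aMax bMax : ℝ)
    (hminValid : ∀ j < n, |y j - (aMin * x j + bMin)| ≤ ε)
    (hmin : ∀ a b : ℝ, (∀ j < n, |y j - (a * x j + b)| ≤ ε) → aMin ≤ a)
    (hmaxValid : ∀ j < n, |y j - (aMax * x j + bMax)| ≤ ε)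
    (hmax : ∀ a b : ℝ, (∀ j < n, |y j - (a * x j + b)| ≤ ε) → a ≤ aMax)
    (hout : y n + ε < aMin * x n + bMin ∨ y n - ε > aMax * x n + bMax) :
    ¬ ∃ a b : ℝ, ∀ j ≤ n, |y j - (a * x j + b)| ≤ ε := by
  rintro ⟨a, b, hab⟩
  have hvalid : ∀ j < n, |y j - (a * x j + b)| ≤ ε := fun j hj => hab j hj.le
  have haMin : aMin ≤ a := hmin a b hvalid
  have haMax : a ≤ aMax := hmax a b hvalid
  have hD : x 0 < x (n - 1) := hx 0 (n - 1) (by omega) (by omega)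
  have hDpos : (0 : ℝ) < x (n - 1) - x 0 := by linarith
  have hxjn : ∀ j < n, x j < x n := fun j hj => hx j n hj le_rfl
  have hxj1 : ∀ j < n, x j ≤ x (n - 1) := by
    intro j hj
    rcases eq_or_lt_of_le (by omega : j ≤ n - 1) with h | h
    · exact h ▸ le_rfl
    · exact (hx j (n - 1) h (by omega)).le
  have hx0j : ∀ j < n, x 0 ≤ x j := by
    intro j hj
    rcases Nat.eq_zero_or_pos j with h | h
    · exact h ▸ le_rfl
    · exact (hx 0 j h (by omega)).le
  have habn := hab n le_rfl
  rw [abs_le] at habn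
  rcases hout with h1 | h2
  · -- case: new point lies strictly below the min-slope line
    set c : ℝ := aMin * x n + bMin - (a * x n + b) with hc
    have hcpos : 0 < c := by
      have := habn.2
      simp only [hc]; linarith
    set δ : ℝ := c / (x (n - 1) - x 0) with hδ
    have hδpos : 0 < δ := div_pos hcpos hDpos
    have hδD : δ * (x (n - 1) - x 0) = c := div_mul_cancel₀ c hDpos.ne'
    have key : ∀ j < n,
        |y j - ((aMin - δ) * x j + ((a * x n + b) - aMin * x n + δ * x (n - 1)))| ≤ ε := by
      intro j hj
      have hv := hvalid j hj
      have hm := hminValid j hj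
      rw [abs_le] at hv hm ⊢
      have hjn := hxjn j hj
      have hj1 := hxj1 j hj
      have h0j := hx0j j hj
      have e1 : 0 ≤ δ * (x j - x 0) := mul_nonneg hδpos.le (by linarith)
      have e2 : 0 ≤ (a - aMin) * (x n - x j) :=
        mul_nonneg (by linarith) (by linarith)
      have e3 : 0 ≤ δ * (x (n - 1) - x j) := mul_nonneg hδpos.le (by linarith)
      constructor
      · nlinarith [hm.1, hv.1, hv.2]
      · nlinarith [hm.1, hv.1, hv.2]
    have hfin := hmin (aMin - δ) ((a * x n + b) - aMin * x n + δ * x (n - 1)) key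
    linarith
  · -- case: new point lies strictly above the max-slope line
    set c : ℝ := (a * x n + b) - (aMax * x n + bMax) with hc
    have hcpos : 0 < c := by
      have := habn.1
      simp only [hc]; linarith
    set δ : ℝ := c / (x (n - 1) - x 0) with hδ
    have hδpos : 0 < δ := div_pos hcpos hDpos
    have hδD : δ * (x (n - 1) - x 0) = c := div_mul_cancel₀ c hDpos.ne'
    have key : ∀ j < n,
        |y j - ((aMax + δ) * x j + ((a * x n + b) - aMax * x n - δ * x (n - 1)))| ≤ ε := by
      intro j hj
      have hv := hvalid j hj
      have hm := hmaxValid j hj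
      rw [abs_le] at hv hm ⊢
      have hjn := hxjn j hj
      have hj1 := hxj1 j hj
      have h0j := hx0j j hj
      have e1 : 0 ≤ δ * (x j - x 0) := mul_nonneg hδpos.le (by linarith)
      have e2 : 0 ≤ (aMax - a) * (x n - x j) :=
        mul_nonneg (by linarith) (by linarith)
      have e3 : 0 ≤ δ * (x (n - 1) - x j) := mul_nonneg hδpos.le (by linarith)
      constructor
      · nlinarith [hm.2, hv.1, hv.2]
      · nlinarith [hm.2, hv.1, hv.2]
    have hfin := hmax (aMax + δ) ((a * x n + b) - aMax * x n - δ * x (n - 1)) key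
    linarith
end

section
/- Let n ≥ 2. Suppose (a_min, b_min) is valid for the first n points (x_0,y_0),…,(x_{n−1},y_{n−1}) with minimal slope among lines valid for those points, and (a_max, b_max) is valid for them with maximal slope. If the new point (x_n, y_n) satisfies y_n + ε ≥ a_min·x_n + b_min and y_n − ε ≤ a_max·x_n + b_max, then there exists a line (a,b) valid for all n+1 points (x_0,y_0),…,(x_n,y_n). -/
/-- if the error segment of the new point `(x n, y n)` lies at
least partially between the extreme-slope lines valid for the first `n`
points, then some line is valid for all `n+1` points. -/
theorem new_point_valid (n : ℕ) (hn : 2 ≤ n) (x y : ℕ → ℝ)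
    (hx : ∀ i j : ℕ, i < j → j ≤ n → x i < x j) (ε : ℝ) (hε : 0 < ε)
    (aMin bMin aMax bMax : ℝ)
    (hminValid : ∀ j < n, |y j - (aMin * x j + bMin)| ≤ ε)
    (hmin : ∀ a b : ℝ, (∀ j < n, |y j - (a * x j + b)| ≤ ε) → aMin ≤ a)
    (hmaxValid : ∀ j < n, |y j - (aMax * x j + bMax)| ≤ ε)
    (hmax : ∀ a b : ℝ, (∀ j < n, |y j - (a * x j + b)| ≤ ε) → a ≤ aMax)
    (hin : aMin * x n + bMin ≤ y n + ε ∧ y n - ε ≤ aMax * x n + bMax) :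
    ∃ a b : ℝ, ∀ j ≤ n, |y j - (a * x j + b)| ≤ ε := by
  obtain ⟨h1, h2⟩ := hin
  set v0 := aMin * x n + bMin with hv0
  set v1 := aMax * x n + bMax with hv1
  by_cases hc : y n - ε ≤ v0
  · exact ⟨aMin, bMin, fun j hj => by
      rcases lt_or_eq_of_le hj with h | h
      · exact hminValid j h
      · subst h; rw [abs_le]; constructor <;> linarith⟩
  · push_neg at hc
    have hd : 0 < v1 - v0 := by linarith
    set t := (y n - ε - v0) / (v1 - v0) with ht
    have ht0 : 0 ≤ t := div_nonneg (by linarith) (by linarith)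
    have ht1 : t ≤ 1 := by
      rw [ht, div_le_one hd]; linarith
    refine ⟨(1 - t) * aMin + t * aMax, (1 - t) * bMin + t * bMax, fun j hj => ?_⟩
    rcases lt_or_eq_of_le hj with h | h
    · have e0 := hminValid j h
      have e1 := hmaxValid j h
      have heq : y j - (((1 - t) * aMin + t * aMax) * x j + ((1 - t) * bMin + t * bMax))
          = (1 - t) * (y j - (aMin * x j + bMin)) + t * (y j - (aMax * x j + bMax)) := by ring
      rw [heq]
      calc |(1-t) * (y j - (aMin * x j + bMin)) + t * (y j - (aMax * x j + bMax))|
          ≤ |(1-t) * (y j - (aMin * x j + bMin))| + |t * (y j - (aMax * x j + bMax))| :=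
            abs_add_le _ _
        _ = (1-t) * |y j - (aMin * x j + bMin)| + t * |y j - (aMax * x j + bMax)| := by
            rw [abs_mul, abs_mul, abs_of_nonneg (by linarith : (0:ℝ) ≤ 1 - t),
              abs_of_nonneg ht0]
        _ ≤ (1-t) * ε + t * ε := by
            have := abs_nonneg (y j - (aMin * x j + bMin))
            have := abs_nonneg (y j - (aMax * x j + bMax))
            nlinarith
        _ = ε := by ring
    · rw [h]
      have hval : ((1 - t) * aMin + t * aMax) * x n + ((1 - t) * bMin + t * bMax)
          = v0 + t * (v1 - v0) := by rw [hv0, hv1]; ring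
      have htv : t * (v1 - v0) = y n - ε - v0 := by
        rw [ht]; field_simp
      rw [hval, htv, abs_le]
      constructor <;> linarith
end
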